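/- Let l ∈ ℝ, let m ≥ 3 be an integer, let λ > 1/2, and let α = (β,k) ∈ ℕ³ and β̃ = (β̃₁,β̃₂) ∈ ℕ² be multi-indices with |α| + |β̃| ≤ m. Then there exists a constant C = C(m,λ) such that for all sufficiently regular functions g, h of (t,x,y): ‖(D^α g · ∂_τ^{β̃}∂_y^{-1}h)(t,·)‖_{L²_{l+k}(Ω)} ≤ C‖g(t)‖_{𝓗^m_{l+λ}}‖h(t)‖_{𝓗^m_{1−λ}}; in particular, for λ = 1, ‖(D^α g · ∂_τ^{β̃}∂_y^{-1}h)(t,·)‖_{L²_{l+k}(Ω)} ≤ C‖g(t)‖_{𝓗^m_{l+1}}‖h(t)‖_{𝓗^m_0}. -/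

import Mathlib

open MeasureTheory Real Set Filter

set_option linter.unusedVariables false

noncomputable section

abbrev F3 := ℝ → ℝ → ℝ → ℝ
abbrev F2 := ℝ → ℝ → ℝ

/-- The domain Ω = 𝕋ₓ × ℝ₊, modeled by its fundamental domain [0,1] × [0,∞) ⊆ ℝ². -/
def OmegaSet : Set (ℝ × ℝ) := (Set.Icc (0:ℝ) 1) ×ˢ (Set.Ici (0:ℝ))

/-- ∂_t for functions of (t,x,y). -/
def pdt (f : F3) : F3 := fun t x y => deriv (fun s => f s x y) t
/-- ∂_x for functions of (t,x,y). -/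
def pdx (f : F3) : F3 := fun t x y => deriv (fun s => f t s y) x
/-- ∂_y for functions of (t,x,y). -/
def pdy (f : F3) : F3 := fun t x y => deriv (fun s => f t x s) y

/-- D^α = ∂_t^{β₁} ∂_x^{β₂} ∂_y^k for α = (β₁,β₂,k). -/
def Dop (b1 b2 k : ℕ) (f : F3) : F3 := (pdt^[b1]) ((pdx^[b2]) ((pdy^[k]) f))

/-- Tangential derivative ∂_τ^β = ∂_t^{β₁} ∂_x^{β₂}. -/
def dtau (b1 b2 : ℕ) (f : F3) : F3 := Dop b1 b2 0 f

/-- ∂_x for functions of (x,y). -/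
def pdX (f : F2) : F2 := fun x y => deriv (fun s => f s y) x
/-- ∂_y for functions of (x,y). -/
def pdY (f : F2) : F2 := fun x y => deriv (fun s => f x s) y

/-- ∂_t for functions of (t,x). -/
def pdtT (f : F2) : F2 := fun t x => deriv (fun s => f s x) t
/-- ∂_x for functions of (t,x). -/
def pdxT (f : F2) : F2 := fun t x => deriv (fun s => f t s) x

/-- Tangential derivative ∂_τ^β for functions of (t,x). -/
def dtauT (b : ℕ × ℕ) (f : F2) : F2 := (pdtT^[b.1]) ((pdxT^[b.2]) f)

/-- Weighted norm ‖f‖_{L²_l(Ω)} = ‖⟨y⟩^l f‖_{L²(Ω)}. -/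
def L2l (l : ℝ) (f : F2) : ℝ :=
  Real.sqrt (∫ p in OmegaSet, (1 + p.2) ^ (2 * l) * (f p.1 p.2) ^ 2)

/-- Weighted L²_l norm of a triple (vector-valued function). -/
def L2l3 (l : ℝ) (f1 f2 f3 : F2) : ℝ :=
  Real.sqrt ((L2l l f1)^2 + (L2l l f2)^2 + (L2l l f3)^2)

def idx2 (m : ℕ) : Finset (ℕ × ℕ) :=
  (Finset.range (m+1) ×ˢ Finset.range (m+1)).filter (fun q => q.1 + q.2 ≤ m)

/-- Squared weighted Sobolev norm ‖f‖²_{H^m_l(Ω)}. -/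
def HmlSq (m : ℕ) (l : ℝ) (f : F2) : ℝ :=
  ∑ q ∈ idx2 m, (L2l (l + (q.2 : ℝ)) ((pdX^[q.1]) ((pdY^[q.2]) f)))^2

/-- Membership f ∈ H^m_l(Ω) (integrability of all weighted derivatives). -/
def MemHml (m : ℕ) (l : ℝ) (f : F2) : Prop :=
  ∀ q ∈ idx2 m, IntegrableOn (fun p : ℝ × ℝ =>
    (1 + p.2) ^ (2 * (l + (q.2 : ℝ))) * (((pdX^[q.1]) ((pdY^[q.2]) f)) p.1 p.2)^2)
    OmegaSet volume

/-- indices α = (β₁,β₂,k) with |α| ≤ m. -/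
def idx3 (m : ℕ) : Finset (ℕ × ℕ × ℕ) :=
  (Finset.range (m+1) ×ˢ Finset.range (m+1) ×ˢ Finset.range (m+1)).filter
    (fun a => a.1 + a.2.1 + a.2.2 ≤ m)

/-- indices α = (β,k) with |α| ≤ m and |β| ≤ m-1. -/
def idxP (m : ℕ) : Finset (ℕ × ℕ × ℕ) :=
  (Finset.range (m+1) ×ˢ Finset.range (m+1) ×ˢ Finset.range (m+1)).filter
    (fun a => a.1 + a.2.1 + a.2.2 ≤ m ∧ a.1 + a.2.1 ≤ m - 1)

/-- tangential indices β with |β| = m. -/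
def idxE (m : ℕ) : Finset (ℕ × ℕ) :=
  (Finset.range (m+1) ×ˢ Finset.range (m+1)).filter (fun b => b.1 + b.2 = m)

/-- Squared norm ‖f(t)‖²_{𝓗^m_l}. -/
def HcalSq (m : ℕ) (l : ℝ) (f : F3) (t : ℝ) : ℝ :=
  ∑ a ∈ idx3 m, (L2l (l + (a.2.2 : ℝ)) (Dop a.1 a.2.1 a.2.2 f t))^2

/-- Membership f(t) ∈ 𝓗^m_l. -/
def MemHcal (m : ℕ) (l : ℝ) (f : F3) (t : ℝ) : Prop :=
  ∀ a ∈ idx3 m, IntegrableOn (fun p : ℝ × ℝ =>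
    (1 + p.2) ^ (2 * (l + (a.2.2 : ℝ))) * (Dop a.1 a.2.1 a.2.2 f t p.1 p.2)^2)
    OmegaSet volume

/-- ‖(u,θ,h)(t)‖_{𝓗^m_l}. -/
def HcalN3 (m : ℕ) (l : ℝ) (u θ h : F3) (t : ℝ) : ℝ :=
  Real.sqrt (HcalSq m l u t + HcalSq m l θ t + HcalSq m l h t)

def LinfOmega (f : F2) : ℝ := sSup ((fun p : ℝ × ℝ => |f p.1 p.2|) '' OmegaSet)

def LinfT (f : ℝ → ℝ) : ℝ := sSup ((fun x => |f x|) '' Set.Icc (0:ℝ) 1)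

def L2T (f : ℝ → ℝ) : ℝ := Real.sqrt (∫ x in Set.Icc (0:ℝ) 1, (f x)^2)

/-- Sobolev norm ‖f‖_{H^s(𝕋ₓ)}. -/
def HsTorus (s : ℕ) (f : ℝ → ℝ) : ℝ :=
  Real.sqrt (∑ j ∈ Finset.range (s+1), ∫ x in Set.Icc (0:ℝ) 1, (iteratedDeriv j f x)^2)

/-- ‖∂_τ^β (U,Θ,H,P)(t)‖_{L²(𝕋ₓ)}. -/
def outerN4 (b : ℕ × ℕ) (U Θ H P : F2) (t : ℝ) : ℝ :=
  Real.sqrt ((L2T (dtauT b U t))^2 + (L2T (dtauT b Θ t))^2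
    + (L2T (dtauT b H t))^2 + (L2T (dtauT b P t))^2)

/-- ‖∂_τ^β (U,Θ,H)(t)‖_{L²(𝕋ₓ)}. -/
def outerN3 (b : ℕ × ℕ) (U Θ H : F2) (t : ℝ) : ℝ :=
  Real.sqrt ((L2T (dtauT b U t))^2 + (L2T (dtauT b Θ t))^2 + (L2T (dtauT b H t))^2)

/-- ‖∂_τ^β (Θ,P)(t)‖_{L²(𝕋ₓ)}. -/
def outerN2 (b : ℕ × ℕ) (Θ P : F2) (t : ℝ) : ℝ :=
  Real.sqrt ((L2T (dtauT b Θ t))^2 + (L2T (dtauT b P t))^2)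

def smooth3 (f : F3) : Prop := ContDiff ℝ (⊤ : ℕ∞) (fun p : ℝ × ℝ × ℝ => f p.1 p.2.1 p.2.2)
def smooth2 (f : F2) : Prop := ContDiff ℝ (⊤ : ℕ∞) (fun p : ℝ × ℝ => f p.1 p.2)

/-- Smoothness and x-periodicity of the outer flow (U,Θ,H,P). -/
def OuterFlow (U Θ H P : F2) : Prop :=
  smooth2 U ∧ smooth2 Θ ∧ smooth2 H ∧ smooth2 P ∧
  ∀ t x, U t (x+1) = U t x ∧ Θ t (x+1) = Θ t x ∧ H t (x+1) = H t x ∧ P t (x+1) = P t x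

/-- The bound M₀ on Σ_{i≤2m+2} sup_{0≤t≤T} ‖∂_t^i(U,Θ,H,P)(t)‖_{H^{2m+2-i}(𝕋ₓ)}. -/
def OuterBound (m : ℕ) (T M0 : ℝ) (U Θ H P : F2) : Prop :=
  ∀ i ≤ 2*m+2, ∀ t ∈ Set.Icc (0:ℝ) T,
    HsTorus (2*m+2-i) ((pdtT^[i] U) t) + HsTorus (2*m+2-i) ((pdtT^[i] Θ) t)
      + HsTorus (2*m+2-i) ((pdtT^[i] H) t) + HsTorus (2*m+2-i) ((pdtT^[i] P) t) ≤ M0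

/-- φ is a smooth auxiliary function with φ(y) = y for y ≥ 2R₀, φ(y) = 0 for 0 ≤ y ≤ R₀. -/
def PhiCutoff (R0 : ℝ) (φ : ℝ → ℝ) : Prop :=
  0 < R0 ∧ ContDiff ℝ (⊤ : ℕ∞) φ ∧ (∀ y, 2*R0 ≤ y → φ y = y) ∧
    ∀ y, 0 ≤ y → y ≤ R0 → φ y = 0

/-- The temperature-dependent viscous flux (θ + Θφ' + 1)∂_y u. -/
def viscF (Θ : F2) (φ : ℝ → ℝ) (θ u : F3) : F3 :=
  fun t x y => (θ t x y + Θ t x * deriv φ y + 1) * pdy u t x y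

/-- Convection operator [(u+Uφ')∂_x + (v−U_xφ)∂_y] f. -/
def convU (U : F2) (φ : ℝ → ℝ) (u v f : F3) : F3 :=
  fun t x y => (u t x y + U t x * deriv φ y) * pdx f t x y
    + (v t x y - pdxT U t x * φ y) * pdy f t x y

/-- Magnetic convection operator [(h+Hφ')∂_x + (g−H_xφ)∂_y] f. -/
def convB (H : F2) (φ : ℝ → ℝ) (h g f : F3) : F3 :=
  fun t x y => (h t x y + H t x * deriv φ y) * pdx f t x y
    + (g t x y - pdxT H t x * φ y) * pdy f t x y

/-- Source term r₁. -/
def srcR1 (μ κ ν cv : ℝ) (U Θ H P : F2) (φ : ℝ → ℝ) : F3 := fun t x y =>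
  pdtT U t x * ((deriv φ y)^2 - deriv φ y - φ y * deriv (deriv φ) y)
  + pdxT P t x * ((deriv φ y)^2 - φ y * deriv (deriv φ) y - 1)
  + U t x * Θ t x * (deriv φ y * deriv (deriv (deriv φ)) y + (deriv (deriv φ) y)^2)
  + U t x * (deriv φ y * deriv (deriv (deriv φ)) y)

/-- Source term r₂. -/
def srcR2 (μ κ ν cv : ℝ) (U Θ H P : F2) (φ : ℝ → ℝ) : F3 := fun t x y =>
  cv * pdtT Θ t x * ((deriv φ y)^2 - deriv φ y)
  + cv * pdxT U t x * Θ t x * (φ y * deriv (deriv φ) y)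
  + κ * Θ t x * deriv (deriv (deriv φ)) y
  - μ * Θ t x * deriv φ y * (U t x * deriv (deriv φ) y)^2
  + μ * (U t x * deriv (deriv φ) y)^2
  + κ * (Θ t x * deriv (deriv φ) y)^2
  + ν * (H t x * deriv (deriv φ) y)^2

/-- Source term r₃. -/
def srcR3 (μ κ ν cv : ℝ) (U Θ H P : F2) (φ : ℝ → ℝ) : F3 := fun t x y =>
  pdtT H t x * ((deriv φ y)^2 - deriv φ y + φ y * deriv (deriv φ) y)
  + ν * H t x * deriv (deriv (deriv φ)) y

/-- Source term r₄ = H_t φ(1−φ') + νHφ''. -/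
def srcR4 (ν : ℝ) (H : F2) (φ : ℝ → ℝ) : F3 := fun t x y =>
  pdtT H t x * φ y * (1 - deriv φ y) + ν * H t x * deriv (deriv φ) y

/-- The transformed MHD boundary layer system (2.8)-(2.9) on [0,T] × Ω. -/
structure MHDSol (μ κ ν cv T R0 : ℝ) (φ : ℝ → ℝ) (U Θ H P : F2)
    (u v θ h g : F3) : Prop where
  periodic : ∀ t x y, u t (x+1) y = u t x y ∧ v t (x+1) y = v t x y ∧
    θ t (x+1) y = θ t x y ∧ h t (x+1) y = h t x y ∧ g t (x+1) y = g t x y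
  eq_u : ∀ t ∈ Set.Icc (0:ℝ) T, ∀ x : ℝ, ∀ y ∈ Set.Ici (0:ℝ),
    pdt u t x y + convU U φ u v u t x y - convB H φ h g h t x y
      - μ * pdy (viscF Θ φ θ u) t x y
      + pdxT U t x * deriv φ y * u t x y + U t x * deriv (deriv φ) y * v t x y
      - pdxT H t x * deriv φ y * h t x y - H t x * deriv (deriv φ) y * g t x y
      - U t x * deriv (deriv (deriv φ)) y * θ t x y
      - U t x * deriv (deriv φ) y * pdy θ t x y
    = srcR1 μ κ ν cv U Θ H P φ t x y
  eq_θ : ∀ t ∈ Set.Icc (0:ℝ) T, ∀ x : ℝ, ∀ y ∈ Set.Ici (0:ℝ),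
    cv * (pdt θ t x y + convU U φ u v θ t x y) - κ * pdy (pdy θ) t x y
      + cv * pdxT Θ t x * deriv φ y * u t x y + cv * Θ t x * deriv (deriv φ) y * v t x y
      - μ * θ t x y * (pdy u t x y)^2
      - μ * (U t x * deriv (deriv φ) y)^2 * θ t x y
      - 2 * μ * U t x * deriv (deriv φ) y * θ t x y * pdy u t x y
      - μ * Θ t x * deriv φ y * (pdy u t x y)^2
      - 2 * μ * Θ t x * U t x * deriv φ y * deriv (deriv φ) y * pdy u t x y
      - 2 * μ * U t x * deriv (deriv φ) y * pdy u t x y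
      - μ * (pdy u t x y)^2 - ν * (pdy h t x y)^2
      - 2 * ν * H t x * deriv φ y * pdy h t x y
    = srcR2 μ κ ν cv U Θ H P φ t x y
  eq_h : ∀ t ∈ Set.Icc (0:ℝ) T, ∀ x : ℝ, ∀ y ∈ Set.Ici (0:ℝ),
    pdt h t x y + convU U φ u v h t x y - convB H φ h g u t x y
      - ν * pdy (pdy h) t x y
      + pdxT H t x * deriv φ y * u t x y + H t x * deriv (deriv φ) y * v t x y
      - pdxT U t x * deriv φ y * h t x y - U t x * deriv (deriv φ) y * g t x y
    = srcR3 μ κ ν cv U Θ H P φ t x y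
  div_u : ∀ t ∈ Set.Icc (0:ℝ) T, ∀ x : ℝ, ∀ y ∈ Set.Ici (0:ℝ),
    pdx u t x y + pdy v t x y = 0
  div_h : ∀ t ∈ Set.Icc (0:ℝ) T, ∀ x : ℝ, ∀ y ∈ Set.Ici (0:ℝ),
    pdx h t x y + pdy g t x y = 0
  bc : ∀ t ∈ Set.Icc (0:ℝ) T, ∀ x : ℝ,
    u t x 0 = 0 ∧ v t x 0 = 0 ∧ θ t x 0 = 0 ∧ pdy h t x 0 = 0 ∧ g t x 0 = 0
  decay : ∀ t ∈ Set.Icc (0:ℝ) T, ∀ x : ℝ,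
    Tendsto (fun y => u t x y) atTop (nhds 0) ∧
    Tendsto (fun y => θ t x y) atTop (nhds 0) ∧
    Tendsto (fun y => h t x y) atTop (nhds 0)

/-- f ∈ L^∞(0,T; 𝓗^m_l). -/
def InLinfH (m : ℕ) (l T : ℝ) (f : F3) : Prop :=
  ∃ C, ∀ t ∈ Set.Icc (0:ℝ) T, HcalSq m l f t ≤ C

/-- f ∈ L²(0,T; 𝓗^m_l). -/
def InL2H (m : ℕ) (l T : ℝ) (f : F3) : Prop :=
  IntegrableOn (fun t => HcalSq m l f t) (Set.Icc (0:ℝ) T) volume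

/-- f ∈ ⋂_{i=0}^{m} W^{i,∞}(0,T; H^{m-i}_l(Ω)). -/
def InCapW (m : ℕ) (l T : ℝ) (f : F3) : Prop :=
  ∀ i ≤ m, ∃ C, ∀ t ∈ Set.Icc (0:ℝ) T, HmlSq (m - i) l ((pdt^[i] f) t) ≤ C

/-- Regularity of a classical solution: smooth, (u,θ,h) ∈ L^∞(0,T;𝓗^m_l) and
(∂_y u, ∂_y θ, ∂_y h) ∈ L²(0,T;𝓗^m_l). -/
def ClassicalSol (m : ℕ) (l T : ℝ) (u θ h : F3) : Prop :=
  smooth3 u ∧ smooth3 θ ∧ smooth3 h ∧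
  InLinfH m l T u ∧ InLinfH m l T θ ∧ InLinfH m l T h ∧
  InL2H m l T (pdy u) ∧ InL2H m l T (pdy θ) ∧ InL2H m l T (pdy h)

/-- h + Hφ' ≥ δ₀ on [0,T] × Ω. -/
def LowerBoundH (T δ0 : ℝ) (φ : ℝ → ℝ) (H : F2) (h : F3) : Prop :=
  ∀ t ∈ Set.Icc (0:ℝ) T, ∀ x : ℝ, ∀ y ∈ Set.Ici (0:ℝ),
    δ0 ≤ h t x y + H t x * deriv φ y

/-- ⟨y⟩^{l+1}|∂_y^i (u,θ,h)| ≤ δ₀⁻¹ for i = 1,2 on [0,T] × Ω. -/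
def DerivBound (T δ0 l : ℝ) (u θ h : F3) : Prop :=
  ∀ t ∈ Set.Icc (0:ℝ) T, ∀ x : ℝ, ∀ y ∈ Set.Ici (0:ℝ),
    (1+y)^(l+1) * |pdy u t x y| ≤ δ0⁻¹ ∧ (1+y)^(l+1) * |pdy θ t x y| ≤ δ0⁻¹ ∧
    (1+y)^(l+1) * |pdy h t x y| ≤ δ0⁻¹ ∧
    (1+y)^(l+1) * |pdy (pdy u) t x y| ≤ δ0⁻¹ ∧
    (1+y)^(l+1) * |pdy (pdy θ) t x y| ≤ δ0⁻¹ ∧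
    (1+y)^(l+1) * |pdy (pdy h) t x y| ≤ δ0⁻¹

/-- ⟨y⟩^{l+1}|∂_y^i (u₀,θ₀,h₀)| ≤ (2δ₀)⁻¹ for i = 1,2 on Ω. -/
def DerivBound0 (δ0 l : ℝ) (u0 θ0 h0 : F2) : Prop :=
  ∀ x : ℝ, ∀ y ∈ Set.Ici (0:ℝ),
    (1+y)^(l+1) * |pdY u0 x y| ≤ (2*δ0)⁻¹ ∧ (1+y)^(l+1) * |pdY θ0 x y| ≤ (2*δ0)⁻¹ ∧
    (1+y)^(l+1) * |pdY h0 x y| ≤ (2*δ0)⁻¹ ∧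
    (1+y)^(l+1) * |pdY (pdY u0) x y| ≤ (2*δ0)⁻¹ ∧
    (1+y)^(l+1) * |pdY (pdY θ0) x y| ≤ (2*δ0)⁻¹ ∧
    (1+y)^(l+1) * |pdY (pdY h0) x y| ≤ (2*δ0)⁻¹

/-- Zeroth-order compatibility conditions of the initial data with the
boundary conditions (standing in for the m-th order compatibility conditions). -/
def CompatUpTo (m : ℕ) (u0 θ0 h0 : F2) : Prop :=
  ∀ x : ℝ, u0 x 0 = 0 ∧ θ0 x 0 = 0 ∧ pdY h0 x 0 = 0

/-- Stream function ψ = ∂_y^{-1} h. -/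
def psiF (h : F3) : F3 := fun t x y => ∫ z in (0:ℝ)..y, h t x z

/-- η = (∂_y f + Aφ'')/(h + Hφ'). -/
def etaF (φ : ℝ → ℝ) (A H : F2) (f h : F3) : F3 :=
  fun t x y => (pdy f t x y + A t x * deriv (deriv φ) y) / (h t x y + H t x * deriv φ y)

/-- Good unknown f_β = ∂_τ^β f − η ∂_τ^β ψ. -/
def goodU (φ : ℝ → ℝ) (A H : F2) (f h : F3) (b : ℕ × ℕ) : F3 :=
  fun t x y => dtau b.1 b.2 f t x y - etaF φ A H f h t x y * dtau b.1 b.2 (psiF h) t x y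

/-- Σ_{|α|≤m, |β|≤m-1} ‖D^α(r₁,r₂,r₃)(t)‖²_{L²_{l+k}}. -/
def srcSq (m : ℕ) (l : ℝ) (μ κ ν cv : ℝ) (U Θ H P : F2) (φ : ℝ → ℝ) (t : ℝ) : ℝ :=
  ∑ a ∈ idxP m,
    ((L2l (l + (a.2.2:ℝ)) (Dop a.1 a.2.1 a.2.2 (srcR1 μ κ ν cv U Θ H P φ) t))^2
     + (L2l (l + (a.2.2:ℝ)) (Dop a.1 a.2.1 a.2.2 (srcR2 μ κ ν cv U Θ H P φ) t))^2
     + (L2l (l + (a.2.2:ℝ)) (Dop a.1 a.2.1 a.2.2 (srcR3 μ κ ν cv U Θ H P φ) t))^2)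

/-- F(0) of Proposition 3.2. -/
def Fzero (m : ℕ) (l δ0 : ℝ) (φ : ℝ → ℝ) (U Θ H : F2) (u θ h : F3) : ℝ :=
  (∑ a ∈ idxP m,
    ((L2l (l + (a.2.2:ℝ)) (Dop a.1 a.2.1 a.2.2 u 0))^2
     + (L2l (l + (a.2.2:ℝ)) (Dop a.1 a.2.1 a.2.2 θ 0))^2
     + (L2l (l + (a.2.2:ℝ)) (Dop a.1 a.2.1 a.2.2 h 0))^2))
  + 36 * δ0⁻¹^4 * ∑ b ∈ idxE m,
      ((L2l l ((goodU φ U H u h b) 0))^2 + (L2l l ((goodU φ Θ H θ h b) 0))^2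
        + (L2l l ((goodU φ H H h h b) 0))^2)

/-- G(t) of Proposition 3.2, with constant C. -/
def Gfun (C : ℝ) (m : ℕ) (l δ0 μ κ ν cv : ℝ) (φ : ℝ → ℝ) (U Θ H P : F2) (t : ℝ) : ℝ :=
  C * δ0⁻¹^8 * ((∑ b ∈ idx2 (m+2), (outerN4 b U Θ H P t)^2) + 1)^5
  + C * srcSq m l μ κ ν cv U Θ H P φ t
  + C * δ0⁻¹^4 * ∑ b ∈ idxE m,
      ((L2l l (dtau b.1 b.2 (srcR1 μ κ ν cv U Θ H P φ) t))^2
       + (L2l l (dtau b.1 b.2 (srcR2 μ κ ν cv U Θ H P φ) t))^2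
       + (L2l l (dtau b.1 b.2 (srcR3 μ κ ν cv U Θ H P φ) t))^2
       + 4 * δ0⁻¹^4 * (L2l (-1) (dtau b.1 b.2 (srcR4 ν H φ) t))^2)

/-- The nonlinear term I₁. -/
def I1def (U Θ H : F2) (φ : ℝ → ℝ) (u v θ h g : F3) : F3 := fun t x y =>
  convU U φ u v u t x y - convB H φ h g h t x y
  + pdxT U t x * deriv φ y * u t x y + U t x * deriv (deriv φ) y * v t x y
  - pdxT H t x * deriv φ y * h t x y - H t x * deriv (deriv φ) y * g t x y
  - U t x * deriv (deriv (deriv φ)) y * θ t x y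
  - U t x * deriv (deriv φ) y * pdy θ t x y

/-- The nonlinear term I₂. -/
def I2def (μ ν cv : ℝ) (U Θ H : F2) (φ : ℝ → ℝ) (u v θ h g : F3) : F3 := fun t x y =>
  cv * convU U φ u v θ t x y
  + cv * pdxT Θ t x * deriv φ y * u t x y + cv * Θ t x * deriv (deriv φ) y * v t x y
  - μ * θ t x y * (pdy u t x y)^2 - μ * (U t x * deriv (deriv φ) y)^2 * θ t x y
  - 2 * μ * U t x * deriv (deriv φ) y * θ t x y * pdy u t x y
  - μ * Θ t x * deriv φ y * (pdy u t x y)^2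
  - 2 * μ * Θ t x * U t x * deriv φ y * deriv (deriv φ) y * pdy u t x y
  - 2 * μ * U t x * deriv (deriv φ) y * pdy u t x y
  - μ * (pdy u t x y)^2 - ν * (pdy h t x y)^2
  - 2 * ν * H t x * deriv φ y * pdy h t x y

/-- The nonlinear term I₃. -/
def I3def (U H : F2) (φ : ℝ → ℝ) (u v θ h g : F3) : F3 := fun t x y =>
  convU U φ u v h t x y - convB H φ h g u t x y
  + pdxT H t x * deriv φ y * u t x y + H t x * deriv (deriv φ) y * v t x y
  - pdxT U t x * deriv φ y * h t x y - U t x * deriv (deriv φ) y * g t x y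

/-- R₁^β, defined as the left-hand side of equation (3.12)₁ for the good unknown u_β. -/
def R1beta (μ ν : ℝ) (φ : ℝ → ℝ) (U Θ H : F2) (u v θ h g : F3) (b : ℕ × ℕ) : F3 :=
  fun t x y =>
    pdt (goodU φ U H u h b) t x y
    + convU U φ u v (goodU φ U H u h b) t x y
    - convB H φ h g (goodU φ H H h h b) t x y
    + ν * etaF φ U H u h t x y * pdy (goodU φ H H h h b) t x y
    - μ * pdy (fun t' x' y' => (θ t' x' y' + Θ t' x' * deriv φ y' + 1)
        * pdy (goodU φ U H u h b) t' x' y') t x y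
    - μ * pdy (fun t' x' y' => (θ t' x' y' + Θ t' x' * deriv φ y' + 1)
        * (pdy (etaF φ U H u h) t' x' y' * dtau b.1 b.2 (psiF h) t' x' y'
           + etaF φ U H u h t' x' y' * dtau b.1 b.2 h t' x' y')) t x y

/-- R₂^β, defined as the left-hand side of equation (3.12)₂ for the good unknown θ_β. -/
def R2beta (κ ν cv : ℝ) (φ : ℝ → ℝ) (U Θ H : F2) (u v θ h g : F3) (b : ℕ × ℕ) : F3 :=
  fun t x y =>
    cv * (pdt (goodU φ Θ H θ h b) t x y + convU U φ u v (goodU φ Θ H θ h b) t x y)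
    - κ * pdy (pdy (goodU φ Θ H θ h b)) t x y
    - κ * pdy (fun t' x' y' => pdy (etaF φ Θ H θ h) t' x' y' * dtau b.1 b.2 (psiF h) t' x' y'
          + etaF φ Θ H θ h t' x' y' * dtau b.1 b.2 h t' x' y') t x y
    + cv * ν * etaF φ Θ H θ h t x y * pdy (goodU φ H H h h b) t x y

/-- R₃^β, defined as the left-hand side of equation (3.12)₃ for the good unknown h_β. -/
def R3beta (ν : ℝ) (φ : ℝ → ℝ) (U Θ H : F2) (u v θ h g : F3) (b : ℕ × ℕ) : F3 :=
  fun t x y =>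
    pdt (goodU φ H H h h b) t x y
    + convU U φ u v (goodU φ H H h h b) t x y
    - convB H φ h g (goodU φ U H u h b) t x y
    - ν * pdy (pdy (goodU φ H H h h b)) t x y


/-!
Tangential derivatives commute with `∂_y⁻¹`, so `ψ := ∂_τ^β̃ ∂_y⁻¹ h = ∂_y⁻¹ H` with
`H := ∂_τ^β̃ h`. Cauchy–Schwarz with the weights `⟨z⟩^{λ-1}` and `⟨z⟩^{1-λ}` gives
`|ψ(x, y)|² ≤ ⟨y⟩^{2λ} ∫₀^∞ ⟨z⟩^{2(1-λ)} H(x, z)² dz`, because `∫₀^y ⟨z⟩^{2λ-2} dz ≤ ⟨y⟩^{2λ}`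
when `λ ≥ 1/2`. Hence the square of the left-hand side is at most `∫₀¹ Φ(x) J(x) dx`, where `Φ`
and `J` are the squared weighted norms of the fibres over `x` of `D^α g` and of `H`. As
`|α| + |β̃| ≤ m` and `m ≥ 1`, one of the two factors can take one more `∂_x`, and the embedding
`H¹(0, 1) ⊂ L^∞` bounds its fibre norm uniformly in `x` by three times its `𝓗^m` norm squared;
the other factor integrates in `x` to at most its `𝓗^m` norm squared. This gives `C = 2 ≥ √3`,
and `λ = 1` is a special case.
-/

open scoped ENNReal

def uncurry3 (f : F3) : ℝ × ℝ × ℝ → ℝ := fun p => f p.1 p.2.1 p.2.2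

theorem Function.iterate_comm_of_forall {α : Type*} {P : α → Prop} {A B : α → α}
    (hB : ∀ a, P a → P (B a)) (hAB : ∀ a, P a → A (B a) = B (A a)) {a : α} (ha : P a) :
    ∀ n : ℕ, A (B^[n] a) = B^[n] (A a)
  | 0 => rfl
  | n + 1 => by
    rw [Function.iterate_succ_apply', Function.iterate_succ_apply',
      hAB _ (Function.Iterate.rec P ha hB n), Function.iterate_comm_of_forall hB hAB ha n]

namespace smooth3

variable {f : F3}

theorem iff_contDiff : smooth3 f ↔ ContDiff ℝ (⊤ : ℕ∞) (uncurry3 f) := Iff.rfl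

theorem continuous (hf : smooth3 f) : Continuous (uncurry3 f) := ContDiff.continuous hf

theorem continuous_xy (hf : smooth3 f) (t : ℝ) : Continuous (Function.uncurry (f t)) :=
  hf.continuous.comp (continuous_const.prodMk continuous_id)

theorem continuous_ty (hf : smooth3 f) (x : ℝ) :
    Continuous (Function.uncurry fun s y => f s x y) :=
  hf.continuous.comp (continuous_fst.prodMk (continuous_const.prodMk continuous_snd))

theorem hasFDerivAt (hf : smooth3 f) (p : ℝ × ℝ × ℝ) :
    HasFDerivAt (uncurry3 f) (fderiv ℝ (uncurry3 f) p) p :=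
  (ContDiff.differentiable hf (by simp) p).hasFDerivAt

theorem hasDerivAt_slice_t (hf : smooth3 f) (t x y : ℝ) :
    HasDerivAt (fun s => f s x y) (fderiv ℝ (uncurry3 f) (t, x, y) (1, 0, 0)) t :=
  (hf.hasFDerivAt _).comp_hasDerivAt (f := fun s : ℝ => (s, x, y)) t
    ((hasDerivAt_id t).prodMk ((hasDerivAt_const t x).prodMk (hasDerivAt_const t y)))

theorem hasDerivAt_slice_x (hf : smooth3 f) (t x y : ℝ) :
    HasDerivAt (fun s => f t s y) (fderiv ℝ (uncurry3 f) (t, x, y) (0, 1, 0)) x :=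
  (hf.hasFDerivAt _).comp_hasDerivAt (f := fun s : ℝ => (t, s, y)) x
    ((hasDerivAt_const x t).prodMk ((hasDerivAt_id x).prodMk (hasDerivAt_const x y)))

theorem hasDerivAt_slice_y (hf : smooth3 f) (t x y : ℝ) :
    HasDerivAt (fun s => f t x s) (fderiv ℝ (uncurry3 f) (t, x, y) (0, 0, 1)) y :=
  (hf.hasFDerivAt _).comp_hasDerivAt (f := fun s : ℝ => (t, x, s)) y
    ((hasDerivAt_const y t).prodMk ((hasDerivAt_const y x).prodMk (hasDerivAt_id y)))

theorem uncurry3_pdt (hf : smooth3 f) :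
    uncurry3 (pdt f) = fun p => fderiv ℝ (uncurry3 f) p (1, 0, 0) :=
  funext fun p => (hf.hasDerivAt_slice_t p.1 p.2.1 p.2.2).deriv

theorem uncurry3_pdx (hf : smooth3 f) :
    uncurry3 (pdx f) = fun p => fderiv ℝ (uncurry3 f) p (0, 1, 0) :=
  funext fun p => (hf.hasDerivAt_slice_x p.1 p.2.1 p.2.2).deriv

theorem uncurry3_pdy (hf : smooth3 f) :
    uncurry3 (pdy f) = fun p => fderiv ℝ (uncurry3 f) p (0, 0, 1) :=
  funext fun p => (hf.hasDerivAt_slice_y p.1 p.2.1 p.2.2).deriv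

theorem hasDerivAt_pdt (hf : smooth3 f) (t x y : ℝ) :
    HasDerivAt (fun s => f s x y) (pdt f t x y) t := by
  convert hf.hasDerivAt_slice_t t x y
  exact congrFun hf.uncurry3_pdt (t, x, y)

theorem hasDerivAt_pdx (hf : smooth3 f) (t x y : ℝ) :
    HasDerivAt (fun s => f t s y) (pdx f t x y) x := by
  convert hf.hasDerivAt_slice_x t x y
  exact congrFun hf.uncurry3_pdx (t, x, y)

theorem contDiff_fderiv_apply (hf : smooth3 f) (v : ℝ × ℝ × ℝ) :
    ContDiff ℝ (⊤ : ℕ∞) fun p => fderiv ℝ (uncurry3 f) p v :=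
  (ContDiff.fderiv_right hf (by exact_mod_cast le_top)).clm_apply contDiff_const

theorem pdt (hf : smooth3 f) : smooth3 (pdt f) := by
  rw [iff_contDiff, hf.uncurry3_pdt]
  exact hf.contDiff_fderiv_apply _

theorem pdx (hf : smooth3 f) : smooth3 (pdx f) := by
  rw [iff_contDiff, hf.uncurry3_pdx]
  exact hf.contDiff_fderiv_apply _

theorem pdy (hf : smooth3 f) : smooth3 (pdy f) := by
  rw [iff_contDiff, hf.uncurry3_pdy]
  exact hf.contDiff_fderiv_apply _

theorem Dop (hf : smooth3 f) (b1 b2 k : ℕ) : smooth3 (Dop b1 b2 k f) :=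
  Function.Iterate.rec smooth3
    (Function.Iterate.rec smooth3 (Function.Iterate.rec smooth3 hf (fun _ => smooth3.pdy) k)
      (fun _ => smooth3.pdx) b2) (fun _ => smooth3.pdt) b1

theorem pdt_pdx (hf : smooth3 f) : _root_.pdt (_root_.pdx f) = _root_.pdx (_root_.pdt f) := by
  have hd2 : Differentiable ℝ (fderiv ℝ (uncurry3 f)) :=
    (ContDiff.fderiv_right hf (m := (⊤ : ℕ∞)) (by exact_mod_cast le_top)).differentiable
      (by simp)
  have second : ∀ v w p, fderiv ℝ (fun q => fderiv ℝ (uncurry3 f) q v) p w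
      = fderiv ℝ (fderiv ℝ (uncurry3 f)) p w v := fun v w p => by
    rw [fderiv_clm_apply (hd2 p) (differentiableAt_const v)]
    simp
  have hsymm : ∀ p, IsSymmSndFDerivAt ℝ (uncurry3 f) p := fun p =>
    (ContDiff.contDiffAt hf).isSymmSndFDerivAt
      (by simpa using WithTop.coe_le_coe.2 (le_top : (2 : ℕ∞) ≤ ⊤))
  funext t x y
  have h1 := congrFun hf.pdx.uncurry3_pdt (t, x, y)
  have h2 := congrFun hf.pdt.uncurry3_pdx (t, x, y)
  simp only [uncurry3] at h1 h2
  rw [h1, h2, hf.uncurry3_pdx, hf.uncurry3_pdt, second, second, hsymm]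

end smooth3

theorem pdx_Dop {f : F3} (hf : smooth3 f) (b1 b2 k : ℕ) :
    pdx (Dop b1 b2 k f) = Dop b1 (b2 + 1) k f := by
  rw [Dop, Function.iterate_comm_of_forall (P := smooth3) (A := pdx) (B := pdt)
    (a := pdx^[b2] (pdy^[k] f)) (fun _ => smooth3.pdt) (fun _ hg => hg.pdt_pdx.symm)
    (hf.Dop 0 b2 k), ← Function.iterate_succ_apply' pdx]
  rfl

theorem hasDerivAt_intervalIntegral_of_continuous {F F' : ℝ → ℝ → ℝ}
    (hF : Continuous (Function.uncurry F)) (hF' : Continuous (Function.uncurry F'))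
    (hd : ∀ s z, HasDerivAt (fun s => F s z) (F' s z) s) (a b s₀ : ℝ) :
    HasDerivAt (fun s => ∫ z in a..b, F s z) (∫ z in a..b, F' s₀ z) s₀ := by
  obtain ⟨M, hM⟩ := ((isCompact_closedBall s₀ 1).prod isCompact_uIcc).exists_bound_of_continuousOn
    (f := Function.uncurry F') (s := Metric.closedBall s₀ 1 ×ˢ uIcc a b) hF'.continuousOn
  refine (intervalIntegral.hasDerivAt_integral_of_dominated_loc_of_deriv_le
    (bound := fun _ => M) (Metric.ball_mem_nhds s₀ one_pos)
    (Eventually.of_forall fun s => (hF.uncurry_left s).aestronglyMeasurable)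
    ((hF.uncurry_left s₀).intervalIntegrable a b) (hF'.uncurry_left s₀).aestronglyMeasurable
    (Eventually.of_forall fun z hz s hs => hM (s, z)
      ⟨Metric.ball_subset_closedBall hs, uIoc_subset_uIcc hz⟩)
    intervalIntegrable_const (Eventually.of_forall fun z _ s _ => hd s z)).2

theorem pdt_psiF {f : F3} (hf : smooth3 f) : pdt (psiF f) = psiF (pdt f) := by
  funext t x y
  exact (hasDerivAt_intervalIntegral_of_continuous (hf.continuous_ty x)
    (hf.pdt.continuous_ty x) (fun s z => hf.hasDerivAt_pdt s x z) 0 y t).deriv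

theorem pdx_psiF {f : F3} (hf : smooth3 f) : pdx (psiF f) = psiF (pdx f) := by
  funext t x y
  exact (hasDerivAt_intervalIntegral_of_continuous (hf.continuous_xy t)
    (hf.pdx.continuous_xy t) (fun s z => hf.hasDerivAt_pdx t s z) 0 y x).deriv

theorem dtau_psiF {f : F3} (hf : smooth3 f) (b1 b2 : ℕ) :
    dtau b1 b2 (psiF f) = psiF (Dop b1 b2 0 f) := by
  have hx := Function.iterate_comm_of_forall (P := smooth3) (A := psiF) (B := pdx)
    (fun _ => smooth3.pdx) (fun _ hg => (pdx_psiF hg).symm) hf b2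
  have ht := Function.iterate_comm_of_forall (P := smooth3) (A := psiF) (B := pdt)
    (fun _ => smooth3.pdt) (fun _ hg => (pdt_psiF hg).symm) (hf.Dop 0 b2 0) b1
  simp only [dtau, Dop, Function.iterate_zero, id_eq] at ht ⊢
  rw [← hx, ht]

theorem sq_le_two_mul_integral_sq_add_integral_sq {f f' : ℝ → ℝ}
    (hd : ∀ s, HasDerivAt f (f' s) s) (hf' : Continuous f') {x : ℝ} (hx : x ∈ Icc (0 : ℝ) 1) :
    f x ^ 2 ≤ 2 * (∫ s in Icc (0 : ℝ) 1, f s ^ 2) + ∫ s in Icc (0 : ℝ) 1, f' s ^ 2 := by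
  have hf : Continuous f := continuous_iff_continuousAt.2 fun s => (hd s).continuousAt
  have hf2 : Continuous fun s => f s ^ 2 := by fun_prop
  have hφ : Continuous fun s => 2 * f s * f' s := by fun_prop
  set K := ∫ s in Icc (0 : ℝ) 1, (f s ^ 2 + f' s ^ 2)
  have hK : K = (∫ s in Icc (0 : ℝ) 1, f s ^ 2) + ∫ s in Icc (0 : ℝ) 1, f' s ^ 2 :=
    integral_add hf2.integrableOn_Icc (hf'.pow 2).integrableOn_Icc
  -- `(f²)' = 2 f f'` and `|2 f f'| ≤ f² + f'²`
  have hvar : ∀ w ∈ Icc (0 : ℝ) 1, f x ^ 2 ≤ f w ^ 2 + K := by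
    intro w hw
    have hftc : ∫ s in w..x, 2 * f s * f' s = f x ^ 2 - f w ^ 2 :=
      intervalIntegral.integral_eq_sub_of_hasDerivAt
        (fun s _ => by simpa using (hd s).pow 2) (hφ.intervalIntegrable w x)
    have hle : ∫ s in w..x, 2 * f s * f' s ≤ K :=
      calc ∫ s in w..x, 2 * f s * f' s
          ≤ ∫ s in uIoc w x, ‖2 * f s * f' s‖ :=
            (Real.le_norm_self _).trans intervalIntegral.norm_integral_le_integral_norm_uIoc
        _ ≤ ∫ s in Icc (0 : ℝ) 1, ‖2 * f s * f' s‖ :=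
            setIntegral_mono_set hφ.norm.integrableOn_Icc
              (Eventually.of_forall fun _ => norm_nonneg _)
              (uIoc_subset_uIcc.trans (uIcc_subset_Icc hw hx)).eventuallyLE
        _ ≤ K := setIntegral_mono_on hφ.norm.integrableOn_Icc
              (hf2.add (hf'.pow 2)).integrableOn_Icc measurableSet_Icc fun s _ => by
                rw [Real.norm_eq_abs, abs_mul, abs_mul, abs_two]
                nlinarith [two_mul_le_add_sq |f s| |f' s|, sq_abs (f s), sq_abs (f' s)]
    linarith
  calc f x ^ 2 = ∫ _ in Icc (0 : ℝ) 1, f x ^ 2 := by simp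
    _ ≤ ∫ w in Icc (0 : ℝ) 1, (f w ^ 2 + K) :=
        setIntegral_mono_on (by simp) (hf2.add continuous_const).integrableOn_Icc
          measurableSet_Icc hvar
    _ = (∫ w in Icc (0 : ℝ) 1, f w ^ 2) + K := by
        rw [integral_add hf2.integrableOn_Icc (by simp)]
        simp
    _ = _ := by linarith [hK]

theorem lintegral_Ioc_rpow_le {lam y : ℝ} (hlam : 1 / 2 ≤ lam) (hy : 0 ≤ y) :
    ∫⁻ z in Ioc (0 : ℝ) y, ENNReal.ofReal ((1 + z) ^ (2 * lam - 2))
      ≤ ENNReal.ofReal ((1 + y) ^ (2 * lam)) :=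
  calc ∫⁻ z in Ioc (0 : ℝ) y, ENNReal.ofReal ((1 + z) ^ (2 * lam - 2))
      ≤ ∫⁻ z in Ioc (0 : ℝ) y, ENNReal.ofReal ((1 + y) ^ (2 * lam - 1)) := by
        refine setLIntegral_mono' measurableSet_Ioc fun z hz => ENNReal.ofReal_le_ofReal ?_
        calc (1 + z) ^ (2 * lam - 2) ≤ (1 + z) ^ (2 * lam - 1) :=
              Real.rpow_le_rpow_of_exponent_le (by linarith [hz.1]) (by linarith)
          _ ≤ (1 + y) ^ (2 * lam - 1) :=
              Real.rpow_le_rpow (by linarith [hz.1]) (by linarith [hz.2]) (by linarith)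
    _ = ENNReal.ofReal ((1 + y) ^ (2 * lam - 1) * y) := by
        rw [setLIntegral_const, Real.volume_Ioc, sub_zero, ← ENNReal.ofReal_mul (by positivity)]
    _ ≤ ENNReal.ofReal ((1 + y) ^ (2 * lam - 1) * (1 + y)) := by
        gcongr
        linarith
    _ = ENNReal.ofReal ((1 + y) ^ (2 * lam)) := by
        rw [← Real.rpow_add_one (by linarith)]
        ring_nf

theorem ofReal_sq_intervalIntegral_le {H : ℝ → ℝ} (hH : Continuous H) {lam y : ℝ}
    (hlam : 1 / 2 ≤ lam) (hy : 0 ≤ y) :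
    ENNReal.ofReal ((∫ z in (0 : ℝ)..y, H z) ^ 2)
      ≤ ENNReal.ofReal ((1 + y) ^ (2 * lam))
        * ∫⁻ z in Ici (0 : ℝ), ENNReal.ofReal ((1 + z) ^ (2 * (1 - lam)) * H z ^ 2) := by
  set f : ℝ → ℝ≥0∞ := fun z => ENNReal.ofReal ((1 + z) ^ (2 * lam - 2))
  set g : ℝ → ℝ≥0∞ := fun z => ENNReal.ofReal ((1 + z) ^ (2 * (1 - lam)) * H z ^ 2)
  -- Cauchy–Schwarz with the weights `⟨z⟩^{λ-1}` and `⟨z⟩^{1-λ}`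
  have hsplit : ∀ z ∈ Ioc (0 : ℝ) y, ‖H z‖ₑ = f z ^ (1 / 2 : ℝ) * g z ^ (1 / 2 : ℝ) := by
    intro z hz
    have hz1 : 0 < 1 + z := by linarith [hz.1]
    have hfg : (1 + z) ^ (2 * lam - 2) * ((1 + z) ^ (2 * (1 - lam)) * H z ^ 2) = H z ^ 2 := by
      rw [← mul_assoc, ← Real.rpow_add hz1, show 2 * lam - 2 + 2 * (1 - lam) = 0 by ring,
        Real.rpow_zero, one_mul]
    rw [← ENNReal.mul_rpow_of_nonneg _ _ (by norm_num), ← ENNReal.ofReal_mul (by positivity),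
      hfg, ENNReal.ofReal_rpow_of_nonneg (sq_nonneg _) (by norm_num), ← Real.sqrt_eq_rpow,
      Real.sqrt_sq_eq_abs, Real.enorm_eq_ofReal_abs]
  have hHoelder := ENNReal.lintegral_mul_norm_pow_le (μ := volume.restrict (Ioc 0 y))
    (f := f) (g := g) (by fun_prop) (by fun_prop) (p := 1 / 2) (q := 1 / 2) (by norm_num)
    (by norm_num) (by norm_num)
  rw [← setLIntegral_congr_fun measurableSet_Ioc hsplit] at hHoelder
  calc ENNReal.ofReal ((∫ z in (0 : ℝ)..y, H z) ^ 2)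
      = ‖∫ z in Ioc (0 : ℝ) y, H z‖ₑ ^ 2 := by
        rw [intervalIntegral.integral_of_le hy, Real.enorm_eq_ofReal_abs,
          ← ENNReal.ofReal_pow (abs_nonneg _), sq_abs]
    _ ≤ (∫⁻ z in Ioc (0 : ℝ) y, ‖H z‖ₑ) ^ 2 := by
        gcongr
        exact enorm_integral_le_lintegral_enorm _
    _ ≤ ((∫⁻ z in Ioc (0 : ℝ) y, f z) ^ (1 / 2 : ℝ)
          * (∫⁻ z in Ioc (0 : ℝ) y, g z) ^ (1 / 2 : ℝ)) ^ 2 := by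
        gcongr
    _ = (∫⁻ z in Ioc (0 : ℝ) y, f z) * ∫⁻ z in Ioc (0 : ℝ) y, g z := by
        rw [← ENNReal.mul_rpow_of_nonneg _ _ (by norm_num), ← ENNReal.rpow_natCast,
          ← ENNReal.rpow_mul]
        norm_num
    _ ≤ _ := by
        gcongr
        · exact lintegral_Ioc_rpow_le hlam hy
        · exact Ioc_subset_Icc_self.trans Icc_subset_Ici_self

theorem measurableSet_omegaSet : MeasurableSet OmegaSet := measurableSet_Icc.prod measurableSet_Ici

theorem lintegral_omegaSet {f : ℝ × ℝ → ℝ≥0∞} (hf : Measurable f) :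
    ∫⁻ p in OmegaSet, f p = ∫⁻ x in Icc (0 : ℝ) 1, ∫⁻ y in Ici (0 : ℝ), f (x, y) := by
  rw [OmegaSet, Measure.volume_eq_prod, ← Measure.prod_restrict, lintegral_prod _ hf.aemeasurable]

theorem setLIntegral_mul_le_of_forall_le {α : Type*} [MeasurableSpace α] {μ : Measure α}
    {s : Set α} (hs : MeasurableSet s) {f g : α → ℝ≥0∞} {A B : ℝ≥0∞} (hA : A ≠ ⊤)
    (hf : ∀ x ∈ s, f x ≤ A) (hg : ∫⁻ x in s, g x ∂μ ≤ B) :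
    ∫⁻ x in s, f x * g x ∂μ ≤ A * B :=
  calc ∫⁻ x in s, f x * g x ∂μ ≤ ∫⁻ x in s, A * g x ∂μ :=
        setLIntegral_mono' hs fun x hx => by gcongr; exact hf x hx
    _ = A * ∫⁻ x in s, g x ∂μ := lintegral_const_mul' A _ hA
    _ ≤ A * B := by gcongr

def fiberSq (c : ℝ) (F : ℝ → ℝ → ℝ) (x : ℝ) : ℝ≥0∞ :=
  ∫⁻ y in Ici (0 : ℝ), ENNReal.ofReal ((1 + y) ^ c * F x y ^ 2)

section fiberSq

variable {F : ℝ → ℝ → ℝ}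

theorem measurable_ofReal_weight_mul_sq (hF : Continuous (Function.uncurry F)) (c : ℝ) :
    Measurable fun p : ℝ × ℝ => ENNReal.ofReal ((1 + p.2) ^ c * F p.1 p.2 ^ 2) := by
  have := hF.measurable
  fun_prop

theorem measurable_fiberSq (hF : Continuous (Function.uncurry F)) (c : ℝ) :
    Measurable (fiberSq c F) :=
  (measurable_ofReal_weight_mul_sq hF c).lintegral_prod_right'

theorem lintegral_omegaSet_eq_lintegral_fiberSq (hF : Continuous (Function.uncurry F)) (c : ℝ) :
    ∫⁻ p in OmegaSet, ENNReal.ofReal ((1 + p.2) ^ c * F p.1 p.2 ^ 2)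
      = ∫⁻ x in Icc (0 : ℝ) 1, fiberSq c F x :=
  lintegral_omegaSet (measurable_ofReal_weight_mul_sq hF c)

theorem ofReal_weight_mul_integral_sq (hF : Continuous (Function.uncurry F)) {c y : ℝ}
    (hy : 0 ≤ y) :
    ENNReal.ofReal ((1 + y) ^ c * ∫ s in Icc (0 : ℝ) 1, F s y ^ 2)
      = ∫⁻ s in Icc (0 : ℝ) 1, ENNReal.ofReal ((1 + y) ^ c * F s y ^ 2) := by
  have hc : Continuous fun s => (1 + y) ^ c * F s y ^ 2 :=
    continuous_const.mul ((hF.uncurry_right y).pow 2)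
  rw [← integral_const_mul, ofReal_integral_eq_lintegral_ofReal hc.integrableOn_Icc
    (Eventually.of_forall fun s => by positivity)]

/-- One-dimensional Sobolev embedding in `x`, uniformly in the fiber variable. -/
theorem fiberSq_le_of_hasDerivAt {F' : ℝ → ℝ → ℝ} (hF : Continuous (Function.uncurry F))
    (hF' : Continuous (Function.uncurry F')) (hd : ∀ x y, HasDerivAt (fun s => F s y) (F' x y) x)
    (c : ℝ) {x : ℝ} (hx : x ∈ Icc (0 : ℝ) 1) :
    fiberSq c F x
      ≤ 2 * (∫⁻ s in Icc (0 : ℝ) 1, fiberSq c F s) + ∫⁻ s in Icc (0 : ℝ) 1, fiberSq c F' s := by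
  have hpt : ∀ y ∈ Ici (0 : ℝ), ENNReal.ofReal ((1 + y) ^ c * F x y ^ 2)
      ≤ 2 * (∫⁻ s in Icc (0 : ℝ) 1, ENNReal.ofReal ((1 + y) ^ c * F s y ^ 2))
        + ∫⁻ s in Icc (0 : ℝ) 1, ENNReal.ofReal ((1 + y) ^ c * F' s y ^ 2) := by
    intro y hy
    have hw : 0 ≤ (1 + y) ^ c := Real.rpow_nonneg (by linarith [mem_Ici.1 hy]) c
    have h1 := sq_le_two_mul_integral_sq_add_integral_sq (fun s => hd s y)
      (hF'.uncurry_right y) hx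
    rw [← ofReal_weight_mul_integral_sq hF hy, ← ofReal_weight_mul_integral_sq hF' hy,
      ← ENNReal.ofReal_ofNat 2, ← ENNReal.ofReal_mul (by norm_num),
      ← ENNReal.ofReal_add (by positivity) (by positivity)]
    refine ENNReal.ofReal_le_ofReal ?_
    nlinarith [mul_le_mul_of_nonneg_left h1 hw]
  have hmeas : ∀ {G : ℝ → ℝ → ℝ}, Continuous (Function.uncurry G) → Measurable fun y =>
      ∫⁻ s in Icc (0 : ℝ) 1, ENNReal.ofReal ((1 + y) ^ c * G s y ^ 2) := fun hG =>
    (measurable_ofReal_weight_mul_sq hG c).lintegral_prod_left'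
  have hswap := fun {G : ℝ → ℝ → ℝ} (hG : Continuous (Function.uncurry G)) =>
    lintegral_lintegral_swap (μ := volume.restrict (Ici (0 : ℝ)))
      (ν := volume.restrict (Icc (0 : ℝ) 1))
      (f := fun y s => ENNReal.ofReal ((1 + y) ^ c * G s y ^ 2))
      ((measurable_ofReal_weight_mul_sq hG c).comp measurable_swap).aemeasurable
  calc fiberSq c F x
      ≤ ∫⁻ y in Ici (0 : ℝ), (2 * (∫⁻ s in Icc (0 : ℝ) 1, ENNReal.ofReal ((1 + y) ^ c * F s y ^ 2))
        + ∫⁻ s in Icc (0 : ℝ) 1, ENNReal.ofReal ((1 + y) ^ c * F' s y ^ 2)) :=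
        setLIntegral_mono' measurableSet_Ici hpt
    _ = _ := by
        rw [lintegral_add_left ((hmeas hF).const_mul 2), lintegral_const_mul 2 (hmeas hF),
          hswap hF, hswap hF']
        rfl

end fiberSq

theorem lintegral_mul_intervalIntegral_sq_le {G H : ℝ → ℝ → ℝ}
    (hG : Continuous (Function.uncurry G)) (hH : Continuous (Function.uncurry H)) {lam : ℝ}
    (hlam : 1 / 2 ≤ lam) (a : ℝ) :
    ∫⁻ p in OmegaSet,
        ENNReal.ofReal ((1 + p.2) ^ (2 * a) * (G p.1 p.2 * ∫ z in (0 : ℝ)..p.2, H p.1 z) ^ 2)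
      ≤ ∫⁻ x in Icc (0 : ℝ) 1, fiberSq (2 * (a + lam)) G x * fiberSq (2 * (1 - lam)) H x := by
  have hpt : ∀ p ∈ OmegaSet,
      ENNReal.ofReal ((1 + p.2) ^ (2 * a) * (G p.1 p.2 * ∫ z in (0 : ℝ)..p.2, H p.1 z) ^ 2)
        ≤ ENNReal.ofReal ((1 + p.2) ^ (2 * (a + lam)) * G p.1 p.2 ^ 2)
          * fiberSq (2 * (1 - lam)) H p.1 := by
    rintro ⟨x, y⟩ ⟨-, hy : 0 ≤ y⟩
    have hy1 : 0 < 1 + y := by linarith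
    have hCS := ofReal_sq_intervalIntegral_le (hH.uncurry_left x) hlam hy
    calc ENNReal.ofReal ((1 + y) ^ (2 * a) * (G x y * ∫ z in (0 : ℝ)..y, H x z) ^ 2)
        = ENNReal.ofReal ((1 + y) ^ (2 * a) * G x y ^ 2)
            * ENNReal.ofReal ((∫ z in (0 : ℝ)..y, H x z) ^ 2) := by
          rw [← ENNReal.ofReal_mul (by positivity)]
          ring_nf
      _ ≤ ENNReal.ofReal ((1 + y) ^ (2 * a) * G x y ^ 2)
            * (ENNReal.ofReal ((1 + y) ^ (2 * lam)) * fiberSq (2 * (1 - lam)) H x) := by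
          gcongr
          exact hCS
      _ = _ := by
          rw [← mul_assoc, ← ENNReal.ofReal_mul (by positivity), mul_add, Real.rpow_add hy1]
          ring_nf
  have hmeas : Measurable fun p : ℝ × ℝ =>
      ENNReal.ofReal ((1 + p.2) ^ (2 * (a + lam)) * G p.1 p.2 ^ 2)
        * fiberSq (2 * (1 - lam)) H p.1 :=
    (measurable_ofReal_weight_mul_sq hG _).mul ((measurable_fiberSq hH _).comp measurable_fst)
  calc _ ≤ _ := setLIntegral_mono' measurableSet_omegaSet hpt
    _ = _ := by
        rw [lintegral_omegaSet hmeas]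
        refine setLIntegral_congr_fun measurableSet_Icc fun x _ => ?_
        exact lintegral_mul_const (fiberSq _ H x)
          (f := fun y => ENNReal.ofReal ((1 + y) ^ (2 * (a + lam)) * G x y ^ 2))
          ((measurable_ofReal_weight_mul_sq hG _).comp measurable_prodMk_left)

theorem L2l_le_sqrt_of_lintegral_le {a B : ℝ} {F : F2} (hB : 0 ≤ B)
    (h : ∫⁻ p in OmegaSet, ENNReal.ofReal ((1 + p.2) ^ (2 * a) * F p.1 p.2 ^ 2)
      ≤ ENNReal.ofReal B) :
    L2l a F ≤ √B := by
  refine Real.sqrt_le_sqrt ?_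
  calc ∫ p in OmegaSet, (1 + p.2) ^ (2 * a) * F p.1 p.2 ^ 2
      ≤ ‖∫ p in OmegaSet, (1 + p.2) ^ (2 * a) * F p.1 p.2 ^ 2‖ := Real.le_norm_self _
    _ ≤ (∫⁻ p in OmegaSet, ENNReal.ofReal ‖(1 + p.2) ^ (2 * a) * F p.1 p.2 ^ 2‖).toReal :=
        norm_integral_le_lintegral_norm _
    _ = (∫⁻ p in OmegaSet, ENNReal.ofReal ((1 + p.2) ^ (2 * a) * F p.1 p.2 ^ 2)).toReal := by
        congr 1
        refine setLIntegral_congr_fun measurableSet_omegaSet fun p hp => ?_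
        have : 0 ≤ 1 + p.2 := by linarith [mem_Ici.1 (mem_prod.1 hp).2]
        rw [Real.norm_of_nonneg (by positivity)]
    _ ≤ B := ENNReal.toReal_le_of_le_ofReal hB h

section Hcal

variable {m : ℕ} {l : ℝ} {f : F3} {t : ℝ} {a1 a2 a3 : ℕ}

theorem mem_idx3 (ha : a1 + a2 + a3 ≤ m) : (a1, a2, a3) ∈ idx3 m := by
  simp only [idx3, Finset.mem_filter, Finset.mem_product, Finset.mem_range]
  omega

theorem integral_weight_mul_sq_Dop_le_HcalSq (ha : a1 + a2 + a3 ≤ m) :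
    ∫ p in OmegaSet, (1 + p.2) ^ (2 * (l + a3)) * Dop a1 a2 a3 f t p.1 p.2 ^ 2
      ≤ HcalSq m l f t := by
  have hnonneg : 0 ≤ ∫ p in OmegaSet, (1 + p.2) ^ (2 * (l + a3)) * Dop a1 a2 a3 f t p.1 p.2 ^ 2 :=
    setIntegral_nonneg measurableSet_omegaSet fun p hp => by
      have : 0 ≤ 1 + p.2 := by linarith [mem_Ici.1 (mem_prod.1 hp).2]
      positivity
  have hterm := Finset.single_le_sum (s := idx3 m) (f := fun a : ℕ × ℕ × ℕ =>
    L2l (l + (a.2.2 : ℝ)) (Dop a.1 a.2.1 a.2.2 f t) ^ 2) (fun _ _ => sq_nonneg _) (mem_idx3 ha)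
  rw [← Real.sq_sqrt hnonneg]
  exact hterm

theorem lintegral_fiberSq_Dop_le (hf : smooth3 f) (hI : MemHcal m l f t)
    (ha : a1 + a2 + a3 ≤ m) :
    ∫⁻ x in Icc (0 : ℝ) 1, fiberSq (2 * (l + a3)) (Dop a1 a2 a3 f t) x
      ≤ ENNReal.ofReal (HcalSq m l f t) := by
  rw [← lintegral_omegaSet_eq_lintegral_fiberSq ((hf.Dop a1 a2 a3).continuous_xy t),
    ← ofReal_integral_eq_lintegral_ofReal (hI _ (mem_idx3 ha))]
  · exact ENNReal.ofReal_le_ofReal (integral_weight_mul_sq_Dop_le_HcalSq ha)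
  · filter_upwards [ae_restrict_mem measurableSet_omegaSet] with p hp
    have : 0 ≤ 1 + p.2 := by linarith [mem_Ici.1 (mem_prod.1 hp).2]
    positivity

theorem fiberSq_Dop_le (hf : smooth3 f) (hI : MemHcal m l f t) (ha : a1 + (a2 + 1) + a3 ≤ m)
    {x : ℝ} (hx : x ∈ Icc (0 : ℝ) 1) :
    fiberSq (2 * (l + a3)) (Dop a1 a2 a3 f t) x ≤ 3 * ENNReal.ofReal (HcalSq m l f t) := by
  have hd : ∀ x y, HasDerivAt (fun s => Dop a1 a2 a3 f t s y) (Dop a1 (a2 + 1) a3 f t x y) x :=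
    fun x y => by simpa [pdx_Dop hf] using (hf.Dop a1 a2 a3).hasDerivAt_pdx t x y
  calc _ ≤ _ := fiberSq_le_of_hasDerivAt ((hf.Dop a1 a2 a3).continuous_xy t)
        ((hf.Dop a1 (a2 + 1) a3).continuous_xy t) hd _ hx
    _ ≤ 2 * ENNReal.ofReal (HcalSq m l f t) + ENNReal.ofReal (HcalSq m l f t) := by
        gcongr
        · exact lintegral_fiberSq_Dop_le hf hI (by omega)
        · exact lintegral_fiberSq_Dop_le hf hI ha
    _ = _ := by ring

end Hcal

/-- The `x`-Sobolev embedding is spent on whichever factor has a derivative to spare. -/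
theorem lintegral_fiberSq_Dop_mul_fiberSq_Dop_le {m : ℕ} (hm : 1 ≤ m) {b1 b2 k c1 c2 j : ℕ}
    (hsum : b1 + b2 + k + (c1 + c2 + j) ≤ m) {g h : F3} (hg : smooth3 g) (hh : smooth3 h)
    {lg lh t : ℝ} (hgI : MemHcal m lg g t) (hhI : MemHcal m lh h t) :
    ∫⁻ x in Icc (0 : ℝ) 1,
        fiberSq (2 * (lg + k)) (Dop b1 b2 k g t) x * fiberSq (2 * (lh + j)) (Dop c1 c2 j h t) x
      ≤ ENNReal.ofReal (3 * (HcalSq m lg g t * HcalSq m lh h t)) := by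
  have hSg : 0 ≤ HcalSq m lg g t := Finset.sum_nonneg fun _ _ => sq_nonneg _
  rw [ENNReal.ofReal_mul (by norm_num), ENNReal.ofReal_mul hSg, ENNReal.ofReal_ofNat]
  rcases le_or_gt (c1 + c2 + j + 1) m with hroom | hfull
  · simp_rw [mul_comm (fiberSq _ (Dop b1 b2 k g t) _)]
    calc _ ≤ 3 * ENNReal.ofReal (HcalSq m lh h t) * ENNReal.ofReal (HcalSq m lg g t) :=
          setLIntegral_mul_le_of_forall_le measurableSet_Icc (by finiteness)
            (fun _ hx => fiberSq_Dop_le hh hhI (by omega) hx)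
            (lintegral_fiberSq_Dop_le hg hgI (by omega))
      _ = _ := by ring
  · calc _ ≤ 3 * ENNReal.ofReal (HcalSq m lg g t) * ENNReal.ofReal (HcalSq m lh h t) :=
          setLIntegral_mul_le_of_forall_le measurableSet_Icc (by finiteness)
            (fun _ hx => fiberSq_Dop_le hg hgI (by omega) hx)
            (lintegral_fiberSq_Dop_le hh hhI (by omega))
      _ = _ := by ring

theorem L2l_Dop_mul_dtau_psiF_le {m : ℕ} (hm : 1 ≤ m) {lam : ℝ} (hlam : 1 / 2 ≤ lam) (l : ℝ)
    {b1 b2 k bt1 bt2 : ℕ} (hsum : b1 + b2 + k + (bt1 + bt2) ≤ m) {g h : F3} (hg : smooth3 g)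
    (hh : smooth3 h) {t : ℝ} (hgI : MemHcal m (l + lam) g t) (hhI : MemHcal m (1 - lam) h t) :
    L2l (l + k) (fun x y => Dop b1 b2 k g t x y * dtau bt1 bt2 (psiF h) t x y)
      ≤ 2 * √(HcalSq m (l + lam) g t) * √(HcalSq m (1 - lam) h t) := by
  have hSg : 0 ≤ HcalSq m (l + lam) g t := Finset.sum_nonneg fun _ _ => sq_nonneg _
  have hSh : 0 ≤ HcalSq m (1 - lam) h t := Finset.sum_nonneg fun _ _ => sq_nonneg _
  have hprod := lintegral_mul_intervalIntegral_sq_le ((hg.Dop b1 b2 k).continuous_xy t)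
    ((hh.Dop bt1 bt2 0).continuous_xy t) hlam (l + k)
  rw [show 2 * (l + k + lam) = 2 * (l + lam + k) by ring,
    show 2 * (1 - lam) = 2 * (1 - lam + ((0 : ℕ) : ℝ)) by simp] at hprod
  rw [dtau_psiF hh]
  calc _ ≤ √(3 * (HcalSq m (l + lam) g t * HcalSq m (1 - lam) h t)) :=
        L2l_le_sqrt_of_lintegral_le (by positivity) (hprod.trans
          (lintegral_fiberSq_Dop_mul_fiberSq_Dop_le hm (by omega) hg hh hgI hhI))
    _ ≤ 2 * √(HcalSq m (l + lam) g t) * √(HcalSq m (1 - lam) h t) := by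
        have h3 : √3 ≤ 2 := Real.sqrt_le_iff.2 ⟨by norm_num, by norm_num⟩
        rw [Real.sqrt_mul (by norm_num), Real.sqrt_mul hSg, ← mul_assoc]
        gcongr

/-- weighted estimate of D^α g · ∂_τ^{β̃} ∂_y^{-1} h, with the
particular case λ = 1. -/
theorem weighted_product_antideriv_estimate (m : ℕ) (hm : 3 ≤ m)
    (lam : ℝ) (hlam : 1/2 < lam) :
    ∃ C > 0, ∀ (l : ℝ) (b1 b2 k bt1 bt2 : ℕ), b1 + b2 + k + (bt1 + bt2) ≤ m →
      ∀ g h : F3, smooth3 g → smooth3 h →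
      ∀ t : ℝ, MemHcal m (l + lam) g t → MemHcal m (1 - lam) h t →
        MemHcal m (l + 1) g t → MemHcal m 0 h t →
      (L2l (l + (k:ℝ)) (fun x y => Dop b1 b2 k g t x y * dtau bt1 bt2 (psiF h) t x y)
          ≤ C * Real.sqrt (HcalSq m (l + lam) g t) * Real.sqrt (HcalSq m (1 - lam) h t))
      ∧ (lam = 1 →
          L2l (l + (k:ℝ)) (fun x y => Dop b1 b2 k g t x y * dtau bt1 bt2 (psiF h) t x y)
            ≤ C * Real.sqrt (HcalSq m (l + 1) g t) * Real.sqrt (HcalSq m 0 h t)) := by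
  refine ⟨2, two_pos, fun l b1 b2 k bt1 bt2 hsum g h hg hh t hg1 hh1 hg2 hh2 =>
    ⟨L2l_Dop_mul_dtau_psiF_le (by omega) hlam.le l hsum hg hh hg1 hh1, fun _ => ?_⟩⟩
  have hone := L2l_Dop_mul_dtau_psiF_le (by omega) (by norm_num) l hsum hg hh hg2
    (show MemHcal m (1 - 1) h t by rwa [sub_self])
  rwa [sub_self] at hone

end
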